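/- arXiv:1607.01496 — 3 statements merged into one kernel-verified Lean document; each statement's English description precedes it below -/
import Mathlib

section
/- If the 2×2 bilinear system F_1 = F_2 = 0 has a solution (x_0:x_1, y_0:y_1) in P^1 × P^1 at which the 2×2 Jacobian matrix (with entries ∂F_k/∂x_1 and ∂F_k/∂y_1 evaluated in the affine chart x_0 = y_0 = 1, assuming x_0 ≠ 0 and y_0 ≠ 0) is singular, then the discriminant Δ = (|a_{00} a_{01}; b_{10} b_{11}| − |a_{10} a_{11}; b_{00} b_{01}|)(|a_{00} a_{10}; b_{01} b_{11}| − |a_{01} a_{11}; b_{00} b_{10}|) − 4|a_{00} a_{01}; a_{10} a_{11}| · |b_{00} b_{01}; b_{10} b_{11}| vanishes. -/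
/-- If the 2×2 bilinear system has an affine solution (chart `x₀ = y₀ = 1`) at which the
2×2 Jacobian (in `x₁, y₁`) is singular, then the discriminant `Δ` vanishes. -/
theorem singular_root_implies_discriminant_zero {K : Type*} [Field K]
    (a00 a01 a10 a11 b00 b01 b10 b11 : K) (x1 y1 : K)
    (hF1 : a00 + a01 * y1 + a10 * x1 + a11 * x1 * y1 = 0)
    (hF2 : b00 + b01 * y1 + b10 * x1 + b11 * x1 * y1 = 0)
    (hJ : (a10 + a11 * y1) * (b01 + b11 * x1) -
          (a01 + a11 * x1) * (b10 + b11 * y1) = 0) :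
    ((a00 * b11 - a01 * b10) - (a10 * b01 - a11 * b00)) *
      ((a00 * b11 - a10 * b01) - (a01 * b10 - a11 * b00)) -
    4 * (a00 * a11 - a01 * a10) * (b00 * b11 - b01 * b10) = 0 := by
  have hQ : (a01 * b11 - a11 * b01) * y1 ^ 2 +
      (a00 * b11 + a01 * b10 - a10 * b01 - a11 * b00) * y1 +
      (a00 * b10 - a10 * b00) = 0 := by
    linear_combination (b10 + b11 * y1) * hF1 - (a10 + a11 * y1) * hF2
  have hQ' : 2 * (a01 * b11 - a11 * b01) * y1 +
      (a00 * b11 + a01 * b10 - a10 * b01 - a11 * b00) = 0 := by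
    linear_combination b11 * hF1 - a11 * hF2 - hJ
  linear_combination (2 * (a01 * b11 - a11 * b01) * y1 +
      (a00 * b11 + a01 * b10 - a10 * b01 - a11 * b00)) * hQ' -
    4 * (a01 * b11 - a11 * b01) * hQ
end

section
/- If the symmetric 6×6 matrix M is singular over an algebraically closed field (equivalently, the quadratic form 2(H_1+H_2+H_3) in the six variables x_1,x_0,y_1,y_0,z_1,z_0 degenerates), then the discriminant Δ(H_1,H_2,H_3) = S² − 4(a_0a_4−a_1a_2)(b_0b_4−b_1b_3)(c_0c_4−c_2c_3) vanishes, where S = a_0(b_3c_4−b_4c_3) − a_1(b_3c_2−b_4c_0) − a_2(b_0c_4−b_1c_3) + a_4(b_0c_2−b_1c_0). -/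
theorem det_gram_matrix_eq_neg_discriminant {R : Type*} [CommRing R]
    (a0 a1 a2 a4 b0 b1 b3 b4 c0 c2 c3 c4 : R) :
    (!![0, 0, a0, a1, b0, b1;
        0, 0, a2, a4, b3, b4;
        a0, a2, 0, 0, c0, c2;
        a1, a4, 0, 0, c3, c4;
        b0, b3, c0, c3, 0, 0;
        b1, b4, c2, c4, 0, 0] : Matrix (Fin 6) (Fin 6) R).det =
    -((a0 * (b3 * c4 - b4 * c3) - a1 * (b3 * c2 - b4 * c0) -
      a2 * (b0 * c4 - b1 * c3) + a4 * (b0 * c2 - b1 * c0)) ^ 2 -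
    4 * (a0 * a4 - a1 * a2) * (b0 * b4 - b1 * b3) * (c0 * c4 - c2 * c3)) := by
  simp [Matrix.det_succ_row_zero, Fin.sum_univ_succ, Fin.succAbove]
  ring

theorem degenerate_form_implies_discriminant_zero_general {K : Type*} [Field K]
    (a0 a1 a2 a4 b0 b1 b3 b4 c0 c2 c3 c4 : K)
    (hM : (!![0, 0, a0, a1, b0, b1;
        0, 0, a2, a4, b3, b4;
        a0, a2, 0, 0, c0, c2;
        a1, a4, 0, 0, c3, c4;
        b0, b3, c0, c3, 0, 0;
        b1, b4, c2, c4, 0, 0] : Matrix (Fin 6) (Fin 6) K).det = 0) :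
    (a0 * (b3 * c4 - b4 * c3) - a1 * (b3 * c2 - b4 * c0) -
      a2 * (b0 * c4 - b1 * c3) + a4 * (b0 * c2 - b1 * c0)) ^ 2 -
    4 * (a0 * a4 - a1 * a2) * (b0 * b4 - b1 * b3) * (c0 * c4 - c2 * c3) = 0 := by
  rwa [det_gram_matrix_eq_neg_discriminant, neg_eq_zero] at hM

/-- If the symmetric 6×6 matrix `M` (the Gram matrix of the quadratic form
`2(H₁+H₂+H₃)`) is singular over an algebraically closed field, then the discriminant
`Δ(H₁,H₂,H₃) = S² − 4(a₀a₄−a₁a₂)(b₀b₄−b₁b₃)(c₀c₄−c₂c₃)` vanishes. -/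
theorem degenerate_form_implies_discriminant_zero {K : Type*} [Field K]
    [IsAlgClosed K] (a0 a1 a2 a4 b0 b1 b3 b4 c0 c2 c3 c4 : K)
    (hM : (!![0, 0, a0, a1, b0, b1;
        0, 0, a2, a4, b3, b4;
        a0, a2, 0, 0, c0, c2;
        a1, a4, 0, 0, c3, c4;
        b0, b3, c0, c3, 0, 0;
        b1, b4, c2, c4, 0, 0] : Matrix (Fin 6) (Fin 6) K).det = 0) :
    (a0 * (b3 * c4 - b4 * c3) - a1 * (b3 * c2 - b4 * c0) -
      a2 * (b0 * c4 - b1 * c3) + a4 * (b0 * c2 - b1 * c0)) ^ 2 -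
    4 * (a0 * a4 - a1 * a2) * (b0 * b4 - b1 * b3) * (c0 * c4 - c2 * c3) = 0 :=
  degenerate_form_implies_discriminant_zero_general a0 a1 a2 a4 b0 b1 b3 b4 c0 c2 c3 c4 hM
end

section
/- For the 2×2 bilinear system, the discriminant Δ lies in the product ideal I_1·I_2, where I_1 is the ideal generated by the six 2×2 minors of the 4×2 matrix with rows (a_{00},a_{01}),(a_{10},a_{11}),(b_{00},b_{01}),(b_{10},b_{11}), and I_2 is the ideal generated by the six 2×2 minors of the 4×2 matrix with rows (a_{00},a_{10}),(a_{01},a_{11}),(b_{00},b_{10}),(b_{01},b_{11}). -/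
open MvPolynomial

/-- For the 2×2 bilinear system, the discriminant `Δ` lies in the product ideal
`I₁·I₂` of the ideals of 2×2 minors of the two 4×2 coefficient matrices. Here we work
in `ℤ[a₀₀,a₀₁,a₁₀,a₁₁,b₀₀,b₀₁,b₁₀,b₁₁]` with the eight coefficients as
indeterminates `X 0, …, X 7`. -/
theorem discriminant_mem_product_of_minor_ideals :
    letI R := MvPolynomial (Fin 8) ℤ
    let a00 : R := X 0; let a01 : R := X 1; let a10 : R := X 2; let a11 : R := X 3
    let b00 : R := X 4; let b01 : R := X 5; let b10 : R := X 6; let b11 : R := X 7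
    let I1 : Ideal R := Ideal.span
      {a00 * a11 - a01 * a10, a00 * b01 - a01 * b00, a00 * b11 - a01 * b10,
       a10 * b01 - a11 * b00, a10 * b11 - a11 * b10, b00 * b11 - b01 * b10}
    let I2 : Ideal R := Ideal.span
      {a00 * a11 - a10 * a01, a00 * b10 - a10 * b00, a00 * b11 - a10 * b01,
       a01 * b10 - a11 * b00, a01 * b11 - a11 * b01, b00 * b11 - b10 * b01}
    ((a00 * b11 - a01 * b10) - (a10 * b01 - a11 * b00)) *
        ((a00 * b11 - a10 * b01) - (a01 * b10 - a11 * b00)) -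
      4 * (a00 * a11 - a01 * a10) * (b00 * b11 - b01 * b10) ∈ I1 * I2 := by
  intro a00 a01 a10 a11 b00 b01 b10 b11 I1 I2
  have hp1 : a00 * a11 - a01 * a10 ∈ I1 := Ideal.subset_span (by simp)
  have hp3 : a00 * b11 - a01 * b10 ∈ I1 := Ideal.subset_span (by simp)
  have hp4 : a10 * b01 - a11 * b00 ∈ I1 := Ideal.subset_span (by simp)
  have hq3 : a00 * b11 - a10 * b01 ∈ I2 := Ideal.subset_span (by simp)
  have hq4 : a01 * b10 - a11 * b00 ∈ I2 := Ideal.subset_span (by simp)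
  have hq6 : b00 * b11 - b10 * b01 ∈ I2 := Ideal.subset_span (by simp)
  have key : ((a00 * b11 - a01 * b10) - (a10 * b01 - a11 * b00)) *
        ((a00 * b11 - a10 * b01) - (a01 * b10 - a11 * b00)) -
      4 * (a00 * a11 - a01 * a10) * (b00 * b11 - b01 * b10)
      = (a00 * b11 - a01 * b10) * (a00 * b11 - a10 * b01)
        - (a00 * b11 - a01 * b10) * (a01 * b10 - a11 * b00)
        - (a10 * b01 - a11 * b00) * (a00 * b11 - a10 * b01)
        + (a10 * b01 - a11 * b00) * (a01 * b10 - a11 * b00)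
        - 4 * ((a00 * a11 - a01 * a10) * (b00 * b11 - b10 * b01)) := by ring
  rw [key]
  exact sub_mem (add_mem (sub_mem (sub_mem (Ideal.mul_mem_mul hp3 hq3)
    (Ideal.mul_mem_mul hp3 hq4)) (Ideal.mul_mem_mul hp4 hq3))
    (Ideal.mul_mem_mul hp4 hq4))
    (Ideal.mul_mem_left _ 4 (Ideal.mul_mem_mul hp1 hq6))
end
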